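/- Define L₀(t) = (1/2π) ∫₀^π (1-cosθ) / [(2-2cosθ) + t²]^{3/2} dθ. Then the Fourier transform L̂₀ satisfies L̂₀(0) = 1/2, and 0 < L̂₀(ξ) ≤ 1/2 for all ξ ∈ ℝ. -/

import Mathlib

open MeasureTheory

/-- `k(t) = (1+t^2)^{-3/2}`. -/
noncomputable def k (t : ℝ) : ℝ := (1 + t ^ 2) ^ (-(3 : ℝ) / 2)

/-- The Fourier transform `k̂(ξ) = ∫ e^{-2πiξt} k(t) dt`. -/
noncomputable def khat (ξ : ℝ) : ℂ :=
  ∫ t : ℝ, Complex.exp ((-(2 * Real.pi * ξ * t) : ℝ) * Complex.I) * (k t : ℂ)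

/-- `L₀(t) = (1/2π) ∫₀^π (1-cosθ)/[(2-2cosθ)+t²]^{3/2} dθ`. -/
noncomputable def L0 (t : ℝ) : ℝ :=
  (1 / (2 * Real.pi)) *
    ∫ θ in (0 : ℝ)..Real.pi, (1 - Real.cos θ) / ((2 - 2 * Real.cos θ) + t ^ 2) ^ ((3 : ℝ) / 2)

/-- The Fourier transform `L̂₀(ξ) = ∫ e^{-2πiξt} L₀(t) dt`. -/
noncomputable def L0hat (ξ : ℝ) : ℂ :=
  ∫ t : ℝ, Complex.exp ((-(2 * Real.pi * ξ * t) : ℝ) * Complex.I) * (L0 t : ℂ)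

/-!
With `r = √(2 - 2 cos θ) = 2 sin (θ / 2)`, the `θ`-integrand of `L₀` is `k (t / r) / (2 r)`, so
Fubini and a dilation give `L̂₀(ξ) = (1 / 4π) ∫₀^π k̂(r ξ) dθ`. Since `|k̂| ≤ ∫ k = k̂(0) = 2`, this
yields `L̂₀(0) = 1/2` and `Re L̂₀ ≤ 1/2`. Positivity of `k̂` comes from writing `k` as a mixture of
Gaussians, `Γ(3/2) k(t) = ∫₀^∞ √s e^{-(1 + t²) s} ds`, which turns `k̂(ξ)` into
`2 ∫₀^∞ e^{-s - π² ξ² / s} ds > 0`.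
-/

open Real Set Function

lemma integral_cos_mul_exp_neg_mul_sq {s : ℝ} (hs : 0 < s) (b : ℝ) :
    ∫ t : ℝ, cos (b * t) * exp (-s * t ^ 2) = √(π / s) * exp (-(b ^ 2 / (4 * s))) := by
  have hs' : 0 < (s : ℂ).re := by simpa using hs
  have hint : Integrable fun t : ℝ => Complex.exp (Complex.I * b * t) * Complex.exp (-s * t ^ 2) :=
    (integrable_cexp_quadratic hs' (Complex.I * b) 0).congr <| .of_forall fun t => by
      simp only [add_zero, Complex.exp_add]; ring
  have hgauss := congrArg Complex.re (fourierIntegral_gaussian hs' b)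
  rw [← RCLike.re_to_complex, ← integral_re hint] at hgauss
  convert hgauss using 1
  · refine integral_congr_ae (.of_forall fun t => ?_)
    simp only [RCLike.re_to_complex, ← Complex.exp_add, Complex.exp_re, Complex.add_re,
      Complex.add_im, Complex.mul_re, Complex.mul_im, Complex.I_re, Complex.I_im,
      Complex.ofReal_re, Complex.ofReal_im, Complex.neg_re, Complex.neg_im, ← Complex.ofReal_pow]
    ring_nf
  · rw [show (π : ℂ) / s = ((π / s : ℝ) : ℂ) by push_cast; ring,
      show -(b : ℂ) ^ 2 / (4 * s) = ((-(b ^ 2 / (4 * s)) : ℝ) : ℂ) by push_cast; ring,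
      show (1 / 2 : ℂ) = ((1 / 2 : ℝ) : ℂ) by norm_num,
      ← Complex.ofReal_exp, ← Complex.ofReal_cpow (by positivity), sqrt_eq_rpow,
      ← Complex.ofReal_mul, Complex.ofReal_re]

lemma integral_sqrt_mul_exp_neg_mul {c : ℝ} (hc : 0 < c) :
    ∫ s in Ioi (0 : ℝ), √s * exp (-(c * s)) = √π / 2 * c ^ (-(3 : ℝ) / 2) := by
  have hΓ : Gamma (3 / 2) = √π / 2 := by
    rw [show (3 : ℝ) / 2 = 1 / 2 + 1 by norm_num, Gamma_add_one (by norm_num), Gamma_one_half_eq]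
    ring
  have h := integral_rpow_mul_exp_neg_mul_Ioi (a := 3 / 2) (by norm_num) hc
  rw [hΓ, show (3 : ℝ) / 2 - 1 = 1 / 2 by norm_num, one_div c, inv_rpow hc.le,
    ← rpow_neg hc.le, ← neg_div] at h
  simp only [← sqrt_eq_rpow] at h
  rw [h, mul_comm]

lemma setIntegral_pos_of_pos {X : Type*} [MeasurableSpace X] {μ : Measure X} {s : Set X}
    {f : X → ℝ} (hfi : IntegrableOn f s μ) (hf : ∀ x, 0 < f x) (hs : 0 < μ s) :
    0 < ∫ x in s, f x ∂μ := by
  rwa [setIntegral_pos_iff_support_of_nonneg_ae (.of_forall fun x => (hf x).le) hfi,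
    support_eq_univ fun x => (hf x).ne', univ_inter]

lemma integrable_cexp_mul_ofReal {f : ℝ → ℝ} (hf : Integrable f) (ξ : ℝ) :
    Integrable fun t : ℝ => Complex.exp ((-(2 * π * ξ * t) : ℝ) * Complex.I) * (f t : ℂ) := by
  refine hf.norm.mono' ((Continuous.aestronglyMeasurable (by fun_prop)).mul
    hf.ofReal.aestronglyMeasurable) (.of_forall fun t => ?_)
  rw [norm_mul, Complex.norm_exp_ofReal_mul_I, one_mul, Complex.norm_real]

lemma integral_cexp_mul_ofReal_inv_mul_div {r : ℝ} (hr : 0 < r) (f : ℝ → ℝ) (ξ : ℝ) :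
    ∫ t : ℝ, Complex.exp ((-(2 * π * ξ * t) : ℝ) * Complex.I) * ((r⁻¹ * f (t / r) : ℝ) : ℂ) =
      ∫ u : ℝ, Complex.exp ((-(2 * π * (r * ξ) * u) : ℝ) * Complex.I) * (f u : ℂ) := by
  have h (t : ℝ) :
      Complex.exp ((-(2 * π * ξ * t) : ℝ) * Complex.I) * ((r⁻¹ * f (t / r) : ℝ) : ℂ) =
        (r⁻¹ : ℂ) * (Complex.exp ((-(2 * π * (r * ξ) * (t / r)) : ℝ) * Complex.I) *
          (f (t / r) : ℂ)) := by
    rw [show 2 * π * (r * ξ) * (t / r) = 2 * π * ξ * t by field_simp]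
    push_cast; ring
  simp_rw [h]
  rw [integral_const_mul, Measure.integral_comp_div (fun u =>
    Complex.exp ((-(2 * π * (r * ξ) * u) : ℝ) * Complex.I) * (f u : ℂ)), abs_of_pos hr,
    Complex.real_smul, ← mul_assoc, inv_mul_cancel₀ (by exact_mod_cast hr.ne'),
    one_mul]

section Subordination

variable {a : ℝ} (b : ℝ)

lemma integrable_cos_mul_exp_neg_mul_sq {s : ℝ} (hs : 0 < s) :
    Integrable fun t : ℝ => cos (b * t) * exp (-s * t ^ 2) := by
  refine (integrable_exp_neg_mul_sq hs).mono' (Continuous.aestronglyMeasurable (by fun_prop))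
    (.of_forall fun t => ?_)
  rw [norm_mul, norm_of_nonneg (exp_pos _).le]
  exact mul_le_of_le_one_left (exp_pos _).le (abs_cos_le_one _)

lemma integral_norm_cos_mul_exp_neg_mul_sq_le {s : ℝ} (hs : 0 < s) :
    ∫ t : ℝ, ‖cos (b * t) * exp (-s * t ^ 2)‖ ≤ √(π / s) := by
  rw [← integral_gaussian]
  refine integral_mono (integrable_cos_mul_exp_neg_mul_sq b hs).norm
    (integrable_exp_neg_mul_sq hs) fun t => ?_
  rw [norm_mul, norm_of_nonneg (exp_pos _).le]
  exact mul_le_of_le_one_left (exp_pos _).le (abs_cos_le_one _)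

lemma cos_mul_sqrt_mul_exp_neg_add_sq_mul (t s : ℝ) :
    cos (b * t) * (√s * exp (-((a + t ^ 2) * s))) =
      √s * exp (-(a * s)) * (cos (b * t) * exp (-s * t ^ 2)) := by
  rw [show -((a + t ^ 2) * s) = -(a * s) + -s * t ^ 2 by ring, exp_add]; ring

lemma integrable_cos_mul_sqrt_mul_exp_neg_mul (ha : 0 < a) :
    Integrable (uncurry fun t s : ℝ => cos (b * t) * (√s * exp (-((a + t ^ 2) * s))))
      (volume.prod (volume.restrict (Ioi 0))) := by
  rw [integrable_prod_iff' (Continuous.aestronglyMeasurable (by fun_prop))]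
  simp only [uncurry_apply_pair, cos_mul_sqrt_mul_exp_neg_add_sq_mul]
  constructor
  · filter_upwards [ae_restrict_mem measurableSet_Ioi] with s hs
    exact (integrable_cos_mul_exp_neg_mul_sq b hs).const_mul _
  · refine ((exp_neg_integrableOn_Ioi 0 ha).const_mul √π).mono'
      ((Continuous.stronglyMeasurable (by fun_prop)).integral_prod_left).aestronglyMeasurable ?_
    filter_upwards [ae_restrict_mem measurableSet_Ioi] with s (hs : 0 < s)
    rw [norm_of_nonneg (integral_nonneg fun _ => norm_nonneg _)]
    simp_rw [norm_mul (√s * _), norm_of_nonneg (by positivity : 0 ≤ √s * exp (-(a * s))),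
      integral_const_mul]
    calc √s * exp (-(a * s)) * ∫ t, ‖cos (b * t) * exp (-s * t ^ 2)‖
        ≤ √s * exp (-(a * s)) * √(π / s) := by
          gcongr; exact integral_norm_cos_mul_exp_neg_mul_sq_le b hs
      _ = √π * exp (-a * s) := by
          rw [sqrt_div' _ hs.le, neg_mul]; field_simp

/-- Insert `Γ(3/2) (a + t²)^{-3/2} = ∫₀^∞ √s e^{-(a + t²) s} ds` and integrate in `t` first:
what remains are Fourier transforms of Gaussians. -/
lemma integral_cos_mul_rpow_neg_three_halves (ha : 0 < a) :
    ∫ t : ℝ, cos (b * t) * (a + t ^ 2) ^ (-(3 : ℝ) / 2) =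
      2 * ∫ s in Ioi (0 : ℝ), exp (-(a * s) - b ^ 2 / (4 * s)) := by
  have hinner_s (t : ℝ) : ∫ s in Ioi (0 : ℝ), cos (b * t) * (√s * exp (-((a + t ^ 2) * s))) =
      √π / 2 * (cos (b * t) * (a + t ^ 2) ^ (-(3 : ℝ) / 2)) := by
    rw [integral_const_mul, integral_sqrt_mul_exp_neg_mul (by positivity)]; ring
  have hinner_t {s : ℝ} (hs : s ∈ Ioi 0) :
      ∫ t : ℝ, cos (b * t) * (√s * exp (-((a + t ^ 2) * s))) =
        √π * exp (-(a * s) - b ^ 2 / (4 * s)) := by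
    simp_rw [cos_mul_sqrt_mul_exp_neg_add_sq_mul]
    rw [integral_const_mul, integral_cos_mul_exp_neg_mul_sq hs, sub_eq_add_neg, exp_add,
      sqrt_div' _ hs.le]
    have : 0 < √s := sqrt_pos.mpr hs
    field_simp
  have hswap := integral_integral_swap (integrable_cos_mul_sqrt_mul_exp_neg_mul b ha)
  rw [integral_congr_ae (.of_forall hinner_s), setIntegral_congr_fun measurableSet_Ioi
    (fun s hs => hinner_t hs), integral_const_mul, integral_const_mul] at hswap
  refine mul_left_cancel₀ (sqrt_pos.mpr pi_pos).ne' ?_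
  linear_combination 2 * hswap

lemma integral_cos_mul_rpow_neg_three_halves_pos (ha : 0 < a) :
    0 < ∫ t : ℝ, cos (b * t) * (a + t ^ 2) ^ (-(3 : ℝ) / 2) := by
  have hint : IntegrableOn (fun s => exp (-(a * s) - b ^ 2 / (4 * s))) (Ioi 0) := by
    refine (exp_neg_integrableOn_Ioi 0 ha).mono' (by fun_prop) ?_
    filter_upwards [ae_restrict_mem measurableSet_Ioi] with s (hs : 0 < s)
    rw [norm_of_nonneg (exp_pos _).le, exp_le_exp, neg_mul, sub_le_self_iff]
    positivity
  rw [integral_cos_mul_rpow_neg_three_halves b ha]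
  exact mul_pos two_pos (setIntegral_pos_of_pos hint (fun _ => exp_pos _) (by simp))

end Subordination

lemma integrable_k : Integrable k := by
  have h := integrable_rpow_neg_one_add_norm_sq (E := ℝ) (μ := volume) (r := 3) (by simp)
  simp only [norm_eq_abs, sq_abs] at h
  exact h

lemma k_nonneg (t : ℝ) : 0 ≤ k t := rpow_nonneg (by positivity) _

lemma continuous_k : Continuous k :=
  (continuous_const.add (continuous_pow 2)).rpow_const fun t =>
    .inl (by positivity : (0 : ℝ) < 1 + t ^ 2).ne'

lemma integral_k : ∫ t, k t = 2 := by
  have h := integral_cos_mul_rpow_neg_three_halves 0 one_pos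
  simp only [zero_mul, cos_zero, one_mul, zero_pow two_ne_zero, zero_div, sub_zero,
    integral_exp_neg_Ioi_zero, mul_one] at h
  exact h

lemma khat_zero : khat 0 = 2 := by
  simp only [khat, mul_zero, zero_mul, neg_zero, Complex.ofReal_zero, Complex.exp_zero, one_mul]
  rw [integral_complex_ofReal, integral_k]; norm_num

lemma re_khat (ξ : ℝ) : (khat ξ).re = ∫ t, cos (2 * π * ξ * t) * k t := by
  rw [khat, ← RCLike.re_to_complex, ← integral_re (integrable_cexp_mul_ofReal integrable_k ξ)]
  simp only [RCLike.re_to_complex, Complex.re_mul_ofReal, Complex.exp_ofReal_mul_I_re, cos_neg]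

lemma re_khat_pos (ξ : ℝ) : 0 < (khat ξ).re := by
  simpa [re_khat, k] using integral_cos_mul_rpow_neg_three_halves_pos (2 * π * ξ) one_pos

lemma norm_khat_le (ξ : ℝ) : ‖khat ξ‖ ≤ 2 := by
  refine (norm_integral_le_integral_norm _).trans_eq ?_
  simp only [norm_mul, Complex.norm_exp_ofReal_mul_I, one_mul, Complex.norm_real,
    norm_of_nonneg (k_nonneg _), integral_k]

lemma integral_inv_mul_k_div {r : ℝ} (hr : 0 < r) : ∫ t, r⁻¹ * k (t / r) = 2 := by
  rw [integral_const_mul, Measure.integral_comp_div, integral_k, smul_eq_mul, abs_of_pos hr]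
  field_simp

/-- The distance `2 sin (θ / 2)` between two points at angle `θ` on the unit circle. -/
noncomputable def chord (θ : ℝ) : ℝ := √(2 - 2 * cos θ)

lemma chord_sq (θ : ℝ) : chord θ ^ 2 = 2 - 2 * cos θ :=
  sq_sqrt (by linarith [cos_le_one θ])

lemma chord_pos {θ : ℝ} (hθ : θ ∈ Ioc 0 π) : 0 < chord θ := by
  have := cos_lt_cos_of_nonneg_of_le_pi le_rfl hθ.2 hθ.1
  rw [cos_zero] at this
  exact sqrt_pos.mpr (by linarith)

lemma continuous_chord : Continuous chord := by
  unfold chord; fun_prop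

lemma one_sub_cos_div_rpow_eq (θ t : ℝ) :
    (1 - cos θ) / ((2 - 2 * cos θ) + t ^ 2) ^ ((3 : ℝ) / 2) =
      (chord θ)⁻¹ * k (t / chord θ) / 2 := by
  have h1 : 1 - cos θ = chord θ ^ 2 / 2 := by rw [chord_sq]; ring
  rw [h1, ← chord_sq]
  have hr0 : 0 ≤ chord θ := sqrt_nonneg _
  rcases hr0.eq_or_lt with h0 | hr
  · simp [← h0]
  · set r := chord θ
    have hX : 0 < 1 + (t / r) ^ 2 := by positivity
    rw [show r ^ 2 + t ^ 2 = r ^ 2 * (1 + (t / r) ^ 2) by field_simp,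
      mul_rpow (by positivity) hX.le,
      show (r ^ 2) ^ ((3 : ℝ) / 2) = r ^ 3 by
        rw [← rpow_natCast, ← rpow_mul hr.le, ← rpow_natCast]; norm_num,
      k, neg_div, rpow_neg hX.le]
    field_simp

lemma L0_eq_integral (t : ℝ) :
    L0 t = 1 / (4 * π) * ∫ θ in Ioc 0 π, (chord θ)⁻¹ * k (t / chord θ) := by
  simp_rw [L0, intervalIntegral.integral_of_le pi_pos.le, one_sub_cos_div_rpow_eq, integral_div]
  ring

lemma integrable_cexp_mul_inv_chord_mul_k_div (ξ : ℝ) :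
    Integrable (uncurry fun t θ : ℝ => Complex.exp ((-(2 * π * ξ * t) : ℝ) * Complex.I) *
        (((chord θ)⁻¹ * k (t / chord θ) : ℝ) : ℂ))
      (volume.prod (volume.restrict (Ioc 0 π))) := by
  have hk := continuous_k.measurable
  have hchord := continuous_chord.measurable
  rw [integrable_prod_iff' (Measurable.aestronglyMeasurable (by fun_prop))]
  simp only [uncurry_apply_pair]
  constructor
  · filter_upwards [ae_restrict_mem measurableSet_Ioc] with θ hθ
    exact integrable_cexp_mul_ofReal
      ((integrable_k.comp_div (chord_pos hθ).ne').const_mul _) ξ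
  · refine (integrableOn_const (C := (2 : ℝ)) (by simp)).congr_fun (fun θ hθ => ?_)
      measurableSet_Ioc
    refine (integral_inv_mul_k_div (chord_pos hθ)).symm.trans
      (integral_congr_ae (.of_forall fun t => ?_))
    dsimp only
    rw [norm_mul, Complex.norm_exp_ofReal_mul_I, one_mul, Complex.norm_real,
      norm_of_nonneg (mul_nonneg (inv_nonneg.mpr (chord_pos hθ).le) (k_nonneg _))]

lemma integral_cexp_mul_inv_chord_mul_k_div {θ : ℝ} (hθ : θ ∈ Ioc 0 π) (ξ : ℝ) :
    ∫ t : ℝ, Complex.exp ((-(2 * π * ξ * t) : ℝ) * Complex.I) *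
      (((chord θ)⁻¹ * k (t / chord θ) : ℝ) : ℂ) = khat (chord θ * ξ) :=
  integral_cexp_mul_ofReal_inv_mul_div (chord_pos hθ) k ξ

lemma integrableOn_khat_chord_mul (ξ : ℝ) :
    IntegrableOn (fun θ => khat (chord θ * ξ)) (Ioc 0 π) :=
  IntegrableOn.congr_fun (integrable_cexp_mul_inv_chord_mul_k_div ξ).integral_prod_right
    (fun _ hθ => integral_cexp_mul_inv_chord_mul_k_div hθ ξ) measurableSet_Ioc

lemma L0hat_eq_integral_khat (ξ : ℝ) :
    L0hat ξ = ((1 / (4 * π) : ℝ) : ℂ) * ∫ θ in Ioc 0 π, khat (chord θ * ξ) := by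
  have hL0 (t : ℝ) : Complex.exp ((-(2 * π * ξ * t) : ℝ) * Complex.I) * (L0 t : ℂ) =
      ((1 / (4 * π) : ℝ) : ℂ) * ∫ θ in Ioc 0 π, Complex.exp ((-(2 * π * ξ * t) : ℝ) * Complex.I) *
        (((chord θ)⁻¹ * k (t / chord θ) : ℝ) : ℂ) := by
    rw [L0_eq_integral, integral_const_mul, Complex.ofReal_mul, integral_complex_ofReal.symm]
    ring
  rw [L0hat, integral_congr_ae (.of_forall hL0), integral_const_mul,
    integral_integral_swap (integrable_cexp_mul_inv_chord_mul_k_div ξ),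
    setIntegral_congr_fun measurableSet_Ioc fun θ hθ => integral_cexp_mul_inv_chord_mul_k_div hθ ξ]

lemma re_L0hat (ξ : ℝ) :
    (L0hat ξ).re = 1 / (4 * π) * ∫ θ in Ioc 0 π, (khat (chord θ * ξ)).re := by
  rw [L0hat_eq_integral_khat, Complex.re_ofReal_mul, ← RCLike.re_to_complex,
    ← integral_re (integrableOn_khat_chord_mul ξ)]
  rfl

/-- `L̂₀(0) = 1/2` and `0 < L̂₀(ξ) ≤ 1/2`. -/
theorem L0hat_bounds :
    L0hat 0 = 1 / 2 ∧ ∀ ξ : ℝ, 0 < (L0hat ξ).re ∧ (L0hat ξ).re ≤ 1 / 2 := by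
  refine ⟨?_, fun ξ => ⟨?_, ?_⟩⟩
  · simp only [L0hat_eq_integral_khat, mul_zero, khat_zero, setIntegral_const,
      Real.volume_real_Ioc_of_le pi_pos.le, sub_zero, Complex.real_smul]
    push_cast
    field_simp
    ring
  · rw [re_L0hat]
    exact mul_pos (by positivity) (setIntegral_pos_of_pos (integrableOn_khat_chord_mul ξ).re
      (fun θ => re_khat_pos _) (by simp [pi_pos]))
  · rw [re_L0hat]
    calc 1 / (4 * π) * ∫ θ in Ioc 0 π, (khat (chord θ * ξ)).re
        ≤ 1 / (4 * π) * ∫ _ in Ioc 0 π, (2 : ℝ) := by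
          refine mul_le_mul_of_nonneg_left (setIntegral_mono_on (integrableOn_khat_chord_mul ξ).re
            (by simp) measurableSet_Ioc fun θ _ => ?_) (by positivity)
          exact (Complex.re_le_norm _).trans (norm_khat_le _)
      _ = 1 / 2 := by
          rw [setIntegral_const, Real.volume_real_Ioc_of_le pi_pos.le, smul_eq_mul]
          field_simp
          ring
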